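/- arXiv:cs/0506014 — 3 statements merged into one kernel-verified Lean document; each statement's English description precedes it below -/
import Mathlib

section
/- Semilinear subsets of ℕ^k are effectively closed under intersection: if S and T are semilinear subsets of ℕ^k, then S ∩ T is semilinear. -/
/-- Parikh vector of a word over a `k`-letter alphabet. -/
def Par {k : ℕ} (w : List (Fin k)) : Fin k → ℕ := fun i => w.count i

/-- The linear set with base `b` and periods `ps`. -/
def LinSet {k : ℕ} (b : Fin k → ℕ) (ps : List (Fin k → ℕ)) : Set (Fin k → ℕ) :=
  {v | ∃ lam : Fin ps.length → ℕ, v = b + ∑ i, lam i • ps.get i}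

/-- The semilinear set described by a finite list of (base, periods) pairs. -/
def SemiSet {k : ℕ} (d : List ((Fin k → ℕ) × List (Fin k → ℕ))) : Set (Fin k → ℕ) :=
  {v | ∃ p ∈ d, v ∈ LinSet p.1 p.2}

/-- A set is semilinear if it is a finite union of linear sets. -/
def IsSemilinear {k : ℕ} (S : Set (Fin k → ℕ)) : Prop := ∃ d, S = SemiSet d

open Set Pointwise

section

variable {k : ℕ}

theorem linSet_eq_vadd_closure (b : Fin k → ℕ) (ps : List (Fin k → ℕ)) :
    LinSet b ps = b +ᵥ (AddSubmonoid.closure {p | p ∈ ps} : Set (Fin k → ℕ)) := by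
  ext v
  simp only [LinSet, ← range_list_get, mem_vadd_set, SetLike.mem_coe,
    AddSubmonoid.mem_closure_range_iff_of_fintype, vadd_eq_add, mem_ofPred_eq]
  constructor
  · rintro ⟨lam, rfl⟩
    exact ⟨_, ⟨lam, rfl⟩, rfl⟩
  · rintro ⟨_, ⟨lam, rfl⟩, rfl⟩
    exact ⟨lam, rfl⟩

theorem isLinearSet_linSet (b : Fin k → ℕ) (ps : List (Fin k → ℕ)) :
    IsLinearSet (LinSet b ps) := by
  rw [linSet_eq_vadd_closure]
  exact ⟨b, _, ps.finite_toSet, rfl⟩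

theorem isLinearSet_iff_exists_eq_linSet {s : Set (Fin k → ℕ)} :
    IsLinearSet s ↔ ∃ b ps, s = LinSet b ps := by
  constructor
  · rw [isLinearSet_iff]
    rintro ⟨b, t, rfl⟩
    exact ⟨b, t.toList, by simp [linSet_eq_vadd_closure]⟩
  · rintro ⟨b, ps, rfl⟩
    exact isLinearSet_linSet b ps

theorem semiSet_eq_biUnion (d : List ((Fin k → ℕ) × List (Fin k → ℕ))) :
    SemiSet d = ⋃ p ∈ {p | p ∈ d}, LinSet p.1 p.2 := by
  ext v
  simp [SemiSet]

theorem isSemilinear_iff_isSemilinearSet {S : Set (Fin k → ℕ)} :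
    IsSemilinear S ↔ IsSemilinearSet S := by
  constructor
  · rintro ⟨d, rfl⟩
    rw [semiSet_eq_biUnion]
    exact .biUnion d.finite_toSet fun p _ => (isLinearSet_linSet p.1 p.2).isSemilinearSet
  · rw [isSemilinearSet_iff]
    rintro ⟨T, hT, rfl⟩
    choose! b ps hbps using fun t ht => isLinearSet_iff_exists_eq_linSet.mp (hT t ht)
    refine ⟨T.toList.map fun t => (b t, ps t), ?_⟩
    ext v
    simp only [SemiSet, mem_ofPred_eq, List.mem_map, Finset.mem_toList, mem_sUnion,
      Finset.mem_coe]
    constructor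
    · rintro ⟨t, ht, hv⟩
      exact ⟨_, ⟨t, ht, rfl⟩, hbps t ht ▸ hv⟩
    · rintro ⟨_, ⟨t, ht, rfl⟩, hv⟩
      exact ⟨t, ht, (hbps t ht).symm ▸ hv⟩

end

/-- semilinear subsets of `ℕ^k` are closed under intersection. -/
theorem semilinear_inter {k : ℕ} (S T : Set (Fin k → ℕ))
    (hS : IsSemilinear S) (hT : IsSemilinear T) : IsSemilinear (S ∩ T) := by
  rw [isSemilinear_iff_isSemilinearSet] at hS hT ⊢
  exact hS.inter hT
end

section
/- For any language L over {a₁,...,a_k} with semilinear Parikh image, the Parikh image of its Kleene star L* is semilinear. -/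
/-! `Par(L*)` is the additive submonoid of `ℕ^k` generated by `Par(L)`, and the submonoid
generated by a union is the Minkowski sum of the submonoids generated by its parts. Semilinear
sets are closed under unions and Minkowski sums, so it remains to see that the submonoid
generated by a linear set `b + ⟨P⟩` is semilinear: it is `{0} ∪ (b + ⟨b, P⟩)`. -/

open Pointwise

namespace AddSubmonoid

variable {M : Type*} [AddCommMonoid M]

theorem coe_closure_union (s t : Set M) :
    (closure (s ∪ t) : Set M) = closure s + closure t := by
  rw [closure_union, coe_sup]

theorem coe_closure_singleton_add_coe_closure (b : M) (s : Set M) :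
    (closure ({b} + (closure s : Set M)) : Set M) =
      ({0} : Set M) ∪ ({b} + closure (insert b s)) := by
  have hgen : ∀ n ∈ closure s, b + n ∈ closure ({b} + (closure s : Set M)) :=
    fun n hn => subset_closure (Set.add_mem_add rfl hn)
  have hb : b ∈ closure (insert b s) := subset_closure (Set.mem_insert b s)
  ext x
  simp only [Set.singleton_add, Set.mem_union, Set.mem_singleton_iff, Set.mem_image,
    SetLike.mem_coe] at hgen ⊢
  constructor
  · intro hx
    induction hx using closure_induction with
    | mem x hx =>
      obtain ⟨n, hn, rfl⟩ := hx
      exact Or.inr ⟨n, closure_mono (Set.subset_insert b s) hn, rfl⟩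
    | zero => exact Or.inl rfl
    | add x y _ _ hx hy =>
      rcases hx with rfl | ⟨m, hm, rfl⟩
      · rwa [zero_add]
      rcases hy with rfl | ⟨n, hn, rfl⟩
      · exact Or.inr ⟨m, hm, (add_zero _).symm⟩
      · exact Or.inr ⟨b + m + n, add_mem (add_mem hb hm) hn, by abel⟩
  · rintro (rfl | ⟨m, hm, rfl⟩)
    · exact zero_mem _
    rw [Set.insert_eq, closure_union, mem_sup] at hm
    obtain ⟨_, hj, n, hn, rfl⟩ := hm
    obtain ⟨j, rfl⟩ := mem_closure_singleton.1 hj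
    rw [add_left_comm]
    exact add_mem (nsmul_mem (by simpa using hgen 0 (zero_mem _)) j) (hgen n hn)

end AddSubmonoid

section Semilinear

variable {k : ℕ}

theorem linSet_eq (b : Fin k → ℕ) (ps : List (Fin k → ℕ)) :
    LinSet b ps = {b} + (AddSubmonoid.closure {x | x ∈ ps} : Set (Fin k → ℕ)) := by
  ext v
  simp [LinSet, ← Set.range_list_get, Set.singleton_add,
    AddSubmonoid.mem_closure_range_iff_of_fintype, eq_comm]

theorem linSet_nil (b : Fin k → ℕ) : LinSet b [] = {b} := by
  simp [linSet_eq]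

theorem linSet_add_linSet (b c : Fin k → ℕ) (ps qs : List (Fin k → ℕ)) :
    LinSet b ps + LinSet c qs = LinSet (b + c) (ps ++ qs) := by
  rw [linSet_eq, linSet_eq, linSet_eq, add_add_add_comm, Set.singleton_add_singleton,
    ← AddSubmonoid.coe_closure_union]
  simp only [List.mem_append, Set.ofPred_or]

theorem coe_closure_linSet (b : Fin k → ℕ) (ps : List (Fin k → ℕ)) :
    (AddSubmonoid.closure (LinSet b ps) : Set (Fin k → ℕ)) =
      LinSet 0 [] ∪ LinSet b (b :: ps) := by
  rw [linSet_nil, linSet_eq b ps, linSet_eq b (b :: ps),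
    AddSubmonoid.coe_closure_singleton_add_coe_closure]
  simp only [List.mem_cons, Set.ofPred_or, Set.ofPred_eq_eq_singleton, Set.insert_eq]

theorem mem_semiSet {d : List ((Fin k → ℕ) × List (Fin k → ℕ))} {v : Fin k → ℕ} :
    v ∈ SemiSet d ↔ ∃ p ∈ d, v ∈ LinSet p.1 p.2 :=
  Iff.rfl

theorem semiSet_nil : SemiSet ([] : List ((Fin k → ℕ) × List (Fin k → ℕ))) = ∅ :=
  Set.eq_empty_of_forall_notMem fun _ => by simp [mem_semiSet]

theorem semiSet_cons (p : (Fin k → ℕ) × List (Fin k → ℕ))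
    (d : List ((Fin k → ℕ) × List (Fin k → ℕ))) :
    SemiSet (p :: d) = LinSet p.1 p.2 ∪ SemiSet d := by
  ext v
  simp [mem_semiSet]

theorem isSemilinear_linSet (b : Fin k → ℕ) (ps : List (Fin k → ℕ)) :
    IsSemilinear (LinSet b ps) :=
  ⟨[(b, ps)], by rw [semiSet_cons, semiSet_nil, Set.union_empty]⟩

theorem IsSemilinear.union {S T : Set (Fin k → ℕ)} (hS : IsSemilinear S) (hT : IsSemilinear T) :
    IsSemilinear (S ∪ T) := by
  obtain ⟨d₁, rfl⟩ := hS
  obtain ⟨d₂, rfl⟩ := hT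
  refine ⟨d₁ ++ d₂, ?_⟩
  ext v
  simp [mem_semiSet, or_and_right, exists_or]

theorem IsSemilinear.add {S T : Set (Fin k → ℕ)} (hS : IsSemilinear S) (hT : IsSemilinear T) :
    IsSemilinear (S + T) := by
  obtain ⟨d₁, rfl⟩ := hS
  obtain ⟨d₂, rfl⟩ := hT
  refine ⟨(d₁ ×ˢ d₂).map fun pq => (pq.1.1 + pq.2.1, pq.1.2 ++ pq.2.2), ?_⟩
  ext v
  rw [Set.mem_add, mem_semiSet]
  constructor
  · rintro ⟨x, ⟨p, hp, hx⟩, y, ⟨q, hq, hy⟩, rfl⟩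
    refine ⟨_, List.mem_map_of_mem (List.mem_product.2 ⟨hp, hq⟩), ?_⟩
    rw [← linSet_add_linSet]
    exact Set.add_mem_add hx hy
  · rintro ⟨_, hr, hv⟩
    obtain ⟨⟨p, q⟩, hpq, rfl⟩ := List.mem_map.1 hr
    rw [List.mem_product] at hpq
    obtain ⟨x, hx, y, hy, rfl⟩ := Set.mem_add.1 ((linSet_add_linSet _ _ _ _).symm ▸ hv)
    exact ⟨x, ⟨p, hpq.1, hx⟩, y, ⟨q, hpq.2, hy⟩, rfl⟩

theorem IsSemilinear.addSubmonoidClosure {S : Set (Fin k → ℕ)} (hS : IsSemilinear S) :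
    IsSemilinear (AddSubmonoid.closure S : Set (Fin k → ℕ)) := by
  obtain ⟨d, rfl⟩ := hS
  induction d with
  | nil =>
    rw [semiSet_nil, AddSubmonoid.closure_empty, AddSubmonoid.coe_bot, ← linSet_nil]
    exact isSemilinear_linSet 0 []
  | cons p d ih =>
    rw [semiSet_cons, AddSubmonoid.coe_closure_union, coe_closure_linSet]
    exact ((isSemilinear_linSet _ _).union (isSemilinear_linSet _ _)).add ih

end Semilinear

section Parikh

variable {k : ℕ}

theorem par_nil : Par ([] : List (Fin k)) = 0 := by
  funext i
  simp [Par]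

theorem par_append (u v : List (Fin k)) : Par (u ++ v) = Par u + Par v := by
  funext i
  simp [Par, List.count_append]

theorem par_flatten (S : List (List (Fin k))) : Par S.flatten = (S.map Par).sum := by
  induction S with
  | nil => exact par_nil
  | cons u S ih => simp [par_append, ih]

theorem image_par_kstar (L : Language (Fin k)) :
    Par '' (KStar.kstar L : Language (Fin k)) = AddSubmonoid.closure (Par '' L) := by
  ext v
  constructor
  · rintro ⟨_, hw, rfl⟩
    obtain ⟨S, rfl, hS⟩ := Language.mem_kstar.1 hw
    rw [par_flatten]
    refine AddSubmonoid.list_sum_mem _ fun x hx => ?_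
    obtain ⟨u, hu, rfl⟩ := List.mem_map.1 hx
    exact AddSubmonoid.subset_closure ⟨u, hS u hu, rfl⟩
  · intro hv
    induction hv using AddSubmonoid.closure_induction with
    | mem x hx =>
      obtain ⟨u, hu, rfl⟩ := hx
      exact ⟨u, le_kstar (a := L) hu, rfl⟩
    | zero => exact ⟨[], L.nil_mem_kstar, par_nil⟩
    | add x y _ _ hx hy =>
      obtain ⟨u, hu, rfl⟩ := hx
      obtain ⟨w, hw, rfl⟩ := hy
      refine ⟨u ++ w, ?_, par_append u w⟩
      rw [← kstar_mul_kstar]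
      exact Language.append_mem_mul hu hw

end Parikh

/-- if `Par(L)` is semilinear then so is `Par(L*)` (Kleene star). -/
theorem parikh_kstar_semilinear {k : ℕ} (L : Language (Fin k))
    (hL : IsSemilinear (Par '' L)) : IsSemilinear (Par '' (KStar.kstar L : Language (Fin k))) := by
  rw [image_par_kstar]
  exact hL.addSubmonoidClosure
end

section
/- Linear sets are closed under intersection with the diagonal in an effective sense: for b, p₁,...,p_m ∈ ℕ², the set {n : (n,n) ∈ L(b,{p₁,...,p_m})} is eventually periodic (i.e., it is semilinear as a subset of ℕ). -/
/-- The linear set in `ℕ²` with base `b` and periods `ps`. -/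
def LinSet2 (b : ℕ × ℕ) (ps : List (ℕ × ℕ)) : Set (ℕ × ℕ) :=
  {v | ∃ lam : Fin ps.length → ℕ, v = b + ∑ i, lam i • ps.get i}

/-- The semilinear subset of `ℕ` described by a finite list of arithmetic progressions,
each given by a pair (base, period). -/
def SemiSet1 (d : List (ℕ × ℕ)) : Set ℕ := {n | ∃ p ∈ d, ∃ lam : ℕ, n = p.1 + lam * p.2}

/-!
If the diagonal slice `S` is finite it is a union of progressions of period `0`. Otherwise pick
infinitely many of its points with coefficient vectors `lam k`; by Dickson's lemma
`lam k ≤ lam l` for some `k < l`, and the period combination with coefficients `lam l - lam k`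
is a diagonal vector `(g, g)` with `g > 0`. Adding it to any representation shows `S + g ⊆ S`,
and such a set is the union, over the residues mod `g` it meets, of the progressions of
period `g` starting at its least element of that residue.
-/

lemma mem_semiSet1_map_pair {l : List ℕ} {g n : ℕ} :
    n ∈ SemiSet1 (l.map fun m => (m, g)) ↔ ∃ m ∈ l, ∃ k, n = m + k * g := by
  simp [SemiSet1]

lemma exists_semiSet1_eq_of_finite {S : Set ℕ} (hS : S.Finite) : ∃ d, S = SemiSet1 d := by
  refine ⟨hS.toFinset.toList.map fun m => (m, 0), Set.ext fun n => ?_⟩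
  simp [mem_semiSet1_map_pair]

lemma add_mul_mem_of_add_mem {S : Set ℕ} {g : ℕ} (hS : ∀ n ∈ S, n + g ∈ S) {m : ℕ} (hm : m ∈ S)
    (k : ℕ) : m + k * g ∈ S := by
  induction k with
  | zero => simpa using hm
  | succ k ih => simpa [add_one_mul, ← add_assoc] using hS _ ih

lemma exists_semiSet1_eq_of_add_mem {S : Set ℕ} {g : ℕ} (hg : 0 < g)
    (hS : ∀ n ∈ S, n + g ∈ S) : ∃ d, S = SemiSet1 d := by
  classical
  let least (r : ℕ) : ℕ := sInf {m | m ∈ S ∧ m % g = r}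
  let residues := (Finset.range g).filter fun r => ∃ n ∈ S, n % g = r
  refine ⟨(residues.toList.map least).map fun m => (m, g), Set.ext fun n => ?_⟩
  simp only [mem_semiSet1_map_pair, List.mem_map, Finset.mem_toList, Finset.mem_filter,
    Finset.mem_range, residues]
  constructor
  · intro hn
    have hle : least (n % g) ≤ n := Nat.sInf_le ⟨hn, rfl⟩
    have hleast : least (n % g) ∈ {m | m ∈ S ∧ m % g = n % g} := Nat.sInf_mem ⟨n, hn, rfl⟩
    have hdvd : g ∣ n - least (n % g) := (Nat.modEq_iff_dvd' hle).mp hleast.2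
    refine ⟨_, ⟨n % g, ⟨Nat.mod_lt _ hg, n, hn, rfl⟩, rfl⟩, (n - least (n % g)) / g, ?_⟩
    rw [Nat.div_mul_cancel hdvd]
    omega
  · rintro ⟨_, ⟨r, ⟨-, hr⟩, rfl⟩, k, rfl⟩
    exact add_mul_mem_of_add_mem hS (Nat.sInf_mem hr).1 k

lemma add_sum_smul_mem_linSet2 {b v : ℕ × ℕ} {ps : List (ℕ × ℕ)} (hv : v ∈ LinSet2 b ps)
    (μ : Fin ps.length → ℕ) : v + ∑ i, μ i • ps.get i ∈ LinSet2 b ps := by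
  obtain ⟨lam, rfl⟩ := hv
  refine ⟨lam + μ, ?_⟩
  simp only [← Fintype.linearCombination_apply, map_add, add_assoc]

lemma exists_diagonal_period_of_infinite {b : ℕ × ℕ} {ps : List (ℕ × ℕ)}
    (hinf : {n : ℕ | (n, n) ∈ LinSet2 b ps}.Infinite) :
    ∃ μ : Fin ps.length → ℕ, ∃ g, 0 < g ∧ ∑ i, μ i • ps.get i = (g, g) := by
  let e := hinf.natEmbedding
  choose lam hlam using fun k => (e k).2
  obtain ⟨k, l, hkl, hle⟩ := wellQuasiOrdered_le lam
  let X := ∑ i, (lam l - lam k) i • ps.get i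
  have hX : ((e l : ℕ), (e l : ℕ)) = ((e k : ℕ), (e k : ℕ)) + X := by
    rw [hlam l, hlam k, add_assoc, ← add_tsub_cancel_of_le hle]
    simp only [← Fintype.linearCombination_apply, map_add, X]
  have hne : (e k : ℕ) ≠ e l := fun h => hkl.ne (e.injective (Subtype.ext h))
  have h1 : (e l : ℕ) = e k + X.1 := congrArg Prod.fst hX
  have h2 : (e l : ℕ) = e k + X.2 := congrArg Prod.snd hX
  exact ⟨lam l - lam k, X.1, by omega, Prod.ext rfl (show X.2 = X.1 by omega)⟩

/-- the diagonal slice `{n : (n,n) ∈ L(b,{p₁,...,p_m})}` of a linear set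
in `ℕ²` is eventually periodic, i.e. semilinear as a subset of `ℕ` (a finite union of
arithmetic progressions). -/
theorem linear_diagonal_slice_semilinear (b : ℕ × ℕ) (ps : List (ℕ × ℕ)) :
    ∃ d : List (ℕ × ℕ), {n : ℕ | ((n, n) : ℕ × ℕ) ∈ LinSet2 b ps} = SemiSet1 d := by
  by_cases hfin : {n : ℕ | ((n, n) : ℕ × ℕ) ∈ LinSet2 b ps}.Finite
  · exact exists_semiSet1_eq_of_finite hfin
  obtain ⟨μ, g, hg, hμ⟩ := exists_diagonal_period_of_infinite hfin
  refine exists_semiSet1_eq_of_add_mem hg fun n hn => ?_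
  have := add_sum_smul_mem_linSet2 hn μ
  rwa [hμ, Prod.mk_add_mk] at this
end
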